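/- For every positive integer ℓ, the sum of c(ℓ,k)/2^k over k from 1 to ℓ with k odd equals ((2ℓ)! / (2^{2ℓ+1} ℓ!)) · (2ℓ/(2ℓ-1)). -/

import Mathlib

/-- Number of cycles of a permutation, counting fixed points as cycles of length 1. -/
def numCycles {n : ℕ} (σ : Equiv.Perm (Fin n)) : ℕ :=
  Multiset.card σ.cycleType + (n - σ.cycleType.sum)

/-- The unsigned Stirling number of the first kind: the number of permutations of
`ℓ` letters with exactly `k` cycles. -/
noncomputable def stirlingC (ℓ k : ℕ) : ℕ :=
  Nat.card {σ : Equiv.Perm (Fin ℓ) // numCycles σ = k}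

/-- The signed Stirling number of the first kind. -/
noncomputable def stirlingS (ℓ k : ℕ) : ℤ :=
  (-1) ^ (ℓ - k) * stirlingC ℓ k

/-!
Inserting a new letter into a permutation of `n` letters either makes it a new fixed point
(one way) or places it in front of one of the `n` old letters in its cycle (`n` ways, cycle count
unchanged), so `∑_σ x ^ (cycles σ) = x (x + 1) ⋯ (x + n - 1) =: P(x)`. The odd part of the
Stirling generating function at `x = 1/2` is `(P(1/2) - P(-1/2)) / 2`, and
`P(-1/2) = -P(1/2) / (2ℓ - 1)`, `P(1/2) = (2ℓ)! / (4^ℓ ℓ!)`.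
-/

open Equiv Finset

namespace Equiv.Perm

variable {α : Type*} [Fintype α] [DecidableEq α]

/-- Splitting `x` off its cycle either dissolves a transposition or shortens the cycle by one. -/
theorem IsCycle.card_cycleType_swap_mul_add {c : Perm α} (hc : c.IsCycle) {x : α}
    (hx : c x ≠ x) :
    Multiset.card (swap x (c x) * c).cycleType + #c.support
      = #(swap x (c x) * c).support + 2 := by
  by_cases hcx : c (c x) = x
  · have hswap := hc.eq_swap_of_apply_apply_eq_self hx hcx
    rw [hswap, swap_apply_left, swap_mul_self, cycleType_one, support_one,
      card_support_swap hx.symm]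
    simp
  · have hsupp : #(swap x (c x) * c).support + 1 = #c.support := by
      rw [support_swap_mul_eq _ _ hcx, sdiff_singleton_eq_erase,
        card_erase_add_one (mem_support.2 hx)]
    rw [(hc.swap_mul hx hcx).cycleType, Multiset.card_singleton]
    omega

theorem card_parts_partition_swap_mul {d : Perm α} {x : α} (hx : d x ≠ x) :
    Multiset.card (swap x (d x) * d).partition.parts = Multiset.card d.partition.parts + 1 := by
  set c := d.cycleOf x
  set g := d * c⁻¹
  have hc : c.IsCycle := d.isCycle_cycleOf hx
  have hcx : c x = d x := d.cycleOf_apply_self x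
  have hcx' : c x ≠ x := hcx ▸ hx
  have hgc : g.Disjoint c :=
    disjoint_mul_inv_of_mem_cycleFactorsFinset
      (cycleOf_mem_cycleFactorsFinset_iff.2 (mem_support.2 hx))
  have hd : d = g * c := by simp [g]
  have hswap_g : (swap x (c x)).Disjoint g := hgc.symm.mono (by
    rw [support_swap hcx'.symm, insert_subset_iff, singleton_subset_iff]
    exact ⟨mem_support.2 hcx', apply_mem_support.2 (mem_support.2 hcx')⟩) le_rfl
  have hsplit : swap x (d x) * d = g * (swap x (c x) * c) := by
    rw [← hcx, hd, ← mul_assoc, hswap_g.commute.eq, mul_assoc]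
  have hgsc : g.Disjoint (swap x (c x) * c) := hgc.mono le_rfl
    (fun y hy => (mem_support_swap_mul_imp_mem_support_ne hy).1)
  have hbound := (swap x (d x) * d).support.card_le_univ
  have hbound' := d.support.card_le_univ
  have hcycle := hc.card_cycleType_swap_mul_add hcx'
  rw [parts_partition, parts_partition, hsplit]
  rw [hsplit, hgsc.card_support_mul] at hbound
  rw [hd] at hbound' ⊢
  simp only [Multiset.card_add, Multiset.card_replicate, hgc.cycleType_mul, hgsc.cycleType_mul,
    hgc.card_support_mul, hgsc.card_support_mul, hc.cycleType, Multiset.card_singleton] at hbound' ⊢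
  omega

end Equiv.Perm

theorem Nat.Partition.card_parts_le {n : ℕ} (p : n.Partition) : Multiset.card p.parts ≤ n := by
  simpa [p.parts_sum] using
    Multiset.card_nsmul_le_sum fun _ hi => Nat.one_le_iff_ne_zero.2 (p.parts_pos hi).ne'

open Equiv.Perm

theorem numCycles_eq_card_parts {n : ℕ} (σ : Perm (Fin n)) :
    numCycles σ = Multiset.card σ.partition.parts := by
  rw [numCycles, parts_partition, Multiset.card_add, Multiset.card_replicate, sum_cycleType,
    Fintype.card_fin]

theorem numCycles_le {n : ℕ} (σ : Perm (Fin n)) : numCycles σ ≤ n := by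
  simpa [numCycles_eq_card_parts] using σ.partition.card_parts_le

theorem decomposeFin_symm_zero_eq_extendDomain {n : ℕ} (e : Perm (Fin n)) :
    decomposeFin.symm (0, e) = e.extendDomain (finSuccAboveEquiv 0) := by
  ext x
  refine Fin.cases ?_ (fun i => ?_) x
  · rw [decomposeFin_symm_apply_zero, extendDomain_apply_not_subtype _ _ (by simp)]
  · rw [decomposeFin_symm_apply_succ,
      extendDomain_apply_subtype e (finSuccAboveEquiv 0) (Fin.succ_ne_zero i),
      ((finSuccAboveEquiv 0).symm_apply_eq (y := i)).2
        (Subtype.ext (by simp [finSuccAboveEquiv_apply]))]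
    simp [finSuccAboveEquiv_apply]

theorem numCycles_decomposeFin_symm_zero {n : ℕ} (e : Perm (Fin n)) :
    numCycles (decomposeFin.symm (0, e)) = numCycles e + 1 := by
  have hsum : e.cycleType.sum ≤ n := by
    simpa [sum_cycleType] using e.support.card_le_univ
  rw [numCycles, numCycles, decomposeFin_symm_zero_eq_extendDomain, cycleType_extendDomain]
  omega

theorem numCycles_decomposeFin_symm_succ {n : ℕ} (i : Fin n) (e : Perm (Fin n)) :
    numCycles (decomposeFin.symm (i.succ, e)) = numCycles e := by
  set d := decomposeFin.symm (i.succ, e)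
  have hd0 : d 0 = i.succ := decomposeFin_symm_apply_zero _ _
  have hsplit : swap 0 (d 0) * d = decomposeFin.symm (0, e) := by
    ext x
    refine Fin.cases ?_ (fun j => ?_) x <;> simp [d, decomposeFin_symm_apply_succ]
  have hparts := card_parts_partition_swap_mul (hd0 ▸ Fin.succ_ne_zero i : d 0 ≠ 0)
  rw [hsplit, ← numCycles_eq_card_parts, ← numCycles_eq_card_parts,
    numCycles_decomposeFin_symm_zero] at hparts
  omega

theorem sum_pow_numCycles {R : Type*} [CommSemiring R] (n : ℕ) (x : R) :
    ∑ σ : Perm (Fin n), x ^ numCycles σ = ∏ i ∈ range n, (x + i) := by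
  induction n with
  | zero => simp [numCycles]
  | succ n ih =>
    rw [← decomposeFin.symm.sum_comp, Fintype.sum_prod_type_right, prod_range_succ, ← ih,
      sum_mul]
    refine sum_congr rfl fun e _ => ?_
    simp only [Fin.sum_univ_succ, numCycles_decomposeFin_symm_zero,
      numCycles_decomposeFin_symm_succ, sum_const, card_univ, Fintype.card_fin, nsmul_eq_mul]
    ring

theorem stirlingC_eq_card_filter (n k : ℕ) :
    stirlingC n k = #{σ : Perm (Fin n) | numCycles σ = k} := by
  rw [stirlingC, Nat.card_eq_fintype_card, Fintype.card_subtype]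

theorem sum_stirlingC_mul_pow {R : Type*} [CommSemiring R] (n : ℕ) (x : R) :
    ∑ k ∈ range (n + 1), (stirlingC n k : R) * x ^ k = ∏ i ∈ range n, (x + i) := by
  rw [← sum_pow_numCycles, ← sum_fiberwise_of_maps_to (g := numCycles)
    fun σ _ => mem_range.2 (Nat.lt_succ_of_le (numCycles_le σ))]
  refine sum_congr rfl fun k _ => ?_
  rw [stirlingC_eq_card_filter, ← nsmul_eq_mul, ← sum_const]
  exact sum_congr rfl fun σ hσ => by rw [(mem_filter.1 hσ).2]

theorem two_mul_sum_filter_odd {R : Type*} [CommRing R] (s : Finset ℕ) (a : ℕ → R) (x : R) :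
    2 * ∑ k ∈ s with Odd k, a k * x ^ k = ∑ k ∈ s, a k * x ^ k - ∑ k ∈ s, a k * (-x) ^ k := by
  rw [sum_filter, mul_sum, ← sum_sub_distrib]
  refine sum_congr rfl fun k _ => ?_
  rcases k.even_or_odd with hk | hk
  · rw [if_neg (Nat.not_odd_iff_even.2 hk), hk.neg_pow]
    ring
  · rw [if_pos hk, hk.neg_pow]
    ring

theorem prod_range_inv_two_add {K : Type*} [Field K] [CharZero K] (n : ℕ) :
    ∏ i ∈ range n, (2⁻¹ + i : K) = (2 * n).factorial / (2 ^ (2 * n) * n.factorial) := by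
  induction n with
  | zero => simp
  | succ n ih =>
    rw [prod_range_succ, ih, show 2 * (n + 1) = 2 * n + 1 + 1 by ring, Nat.factorial_succ,
      Nat.factorial_succ, Nat.factorial_succ]
    push_cast
    field_simp
    ring

theorem prod_range_neg_inv_two_add_mul {K : Type*} [Field K] [CharZero K] (n : ℕ) :
    (∏ i ∈ range n, (-2⁻¹ + i : K)) * (2 * n - 1) = -∏ i ∈ range n, (2⁻¹ + i : K) := by
  cases n with
  | zero => simp
  | succ n =>
    have hshift : ∀ i ∈ range n, (-2⁻¹ + ((i + 1 : ℕ) : K)) = 2⁻¹ + i := fun i _ => by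
      push_cast
      ring
    rw [prod_range_succ', prod_congr rfl hshift, prod_range_succ]
    push_cast
    ring

theorem stmt_9_general (ℓ : ℕ) :
    ∑ k ∈ (Finset.Icc 1 ℓ).filter (fun k => Odd k), (stirlingC ℓ k : ℝ) / 2 ^ k
      = (Nat.factorial (2 * ℓ)) / (2 ^ (2 * ℓ + 1) * Nat.factorial ℓ) *
          ((2 * (ℓ : ℝ)) / (2 * (ℓ : ℝ) - 1)) := by
  have hodd : (Icc 1 ℓ).filter (fun k => Odd k) = (range (ℓ + 1)).filter (fun k => Odd k) := by
    ext k
    simp only [mem_filter, mem_Icc, mem_range]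
    exact and_congr_left fun hk => by have := hk.pos; omega
  have hsplit := two_mul_sum_filter_odd (range (ℓ + 1)) (fun k => (stirlingC ℓ k : ℝ)) 2⁻¹
  rw [sum_stirlingC_mul_pow, sum_stirlingC_mul_pow] at hsplit
  have hne : (2 * ℓ - 1 : ℝ) ≠ 0 :=
    sub_ne_zero.2 (by exact_mod_cast (by omega : 2 * ℓ ≠ 1))
  have hneg : ∏ i ∈ range ℓ, (-2⁻¹ + i : ℝ) = -(∏ i ∈ range ℓ, (2⁻¹ + i : ℝ)) / (2 * ℓ - 1) := by
    rw [eq_div_iff hne, prod_range_neg_inv_two_add_mul]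
  calc ∑ k ∈ (Icc 1 ℓ).filter (fun k => Odd k), (stirlingC ℓ k : ℝ) / 2 ^ k
      = ∑ k ∈ (range (ℓ + 1)).filter (fun k => Odd k), (stirlingC ℓ k : ℝ) * 2⁻¹ ^ k := by
        simp only [hodd, inv_pow, div_eq_mul_inv]
    _ = ((∏ i ∈ range ℓ, (2⁻¹ + i : ℝ)) - ∏ i ∈ range ℓ, (-2⁻¹ + i : ℝ)) / 2 := by
        rw [← hsplit]
        ring
    _ = (∏ i ∈ range ℓ, (2⁻¹ + i : ℝ)) / 2 * (2 * ℓ / (2 * ℓ - 1)) := by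
        rw [hneg]
        field_simp
        ring
    _ = _ := by
        rw [prod_range_inv_two_add, pow_succ]
        field_simp

theorem stmt_9 (ℓ : ℕ) (hℓ : 0 < ℓ) :
    ∑ k ∈ (Finset.Icc 1 ℓ).filter (fun k => Odd k), (stirlingC ℓ k : ℝ) / 2 ^ k
      = (Nat.factorial (2 * ℓ)) / (2 ^ (2 * ℓ + 1) * Nat.factorial ℓ) *
          ((2 * (ℓ : ℝ)) / (2 * (ℓ : ℝ) - 1)) :=
  stmt_9_general ℓ
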